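/- arXiv:2408.01249 — 6 statements merged into one kernel-verified Lean document; each statement's English description precedes it below -/
import Mathlib

section
/- Let G be a finite group. If every non-nilpotent maximal subgroup of G is normal, then every maximal subgroup of G containing the normalizer of some Sylow subgroup is nilpotent. -/
theorem stmt_2 (G : Type*) [Group G] [Finite G]
    (h : ∀ M : Subgroup G, IsCoatom M → ¬ Group.IsNilpotent M → M.Normal) :
    ∀ M : Subgroup G, IsCoatom M →
      (∃ (p : ℕ) (_ : Fact p.Prime) (P : Sylow p G), Subgroup.normalizer ((P : Subgroup G) : Set G) ≤ M) →
      Group.IsNilpotent M := by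
  intro M hM ⟨p, hp, P, hPM⟩
  by_contra hn
  have hnorm : M.Normal := h M hM hn
  have hP : (P : Subgroup G) ≤ M := le_trans Subgroup.le_normalizer hPM
  have htop := Sylow.normalizer_sup_eq_top' P hP
  exact hM.1 (top_le_iff.mp (htop ▸ sup_le hPM le_rfl))
end

section
/- Let G be a finite group, let M be a maximal subgroup of G that is nilpotent, and suppose M is not a Hall subgroup of G. Then M has a Sylow q-subgroup Q (for some prime q) that is not a Sylow q-subgroup of G, and N_G(Q) = G, i.e., Q is normal in G. -/
theorem stmt_3 (G : Type*) [Group G] [Finite G] (M : Subgroup G)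
    (hM : IsCoatom M) (hnil : Group.IsNilpotent M)
    (hnotHall : ¬ (Nat.card M).Coprime M.index) :
    ∃ (q : ℕ) (_ : Fact q.Prime) (Q : Sylow q M),
      (∀ P : Sylow q G, ((Q : Subgroup M).map M.subtype) ≠ (P : Subgroup G)) ∧
      ((Q : Subgroup M).map M.subtype).Normal := by
  obtain ⟨q, hq, hqM, hqI⟩ := Nat.Prime.not_coprime_iff_dvd.mp hnotHall
  haveI : Fact q.Prime := ⟨hq⟩
  obtain ⟨Q⟩ := (inferInstance : Nonempty (Sylow q M))
  set Q' : Subgroup G := (Q : Subgroup M).map M.subtype with hQ'def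
  have hQ'leM : Q' ≤ M := Subgroup.map_subtype_le _
  -- Q' is not a Sylow subgroup of G
  have hnotSylow : ∀ P : Sylow q G, Q' ≠ (P : Subgroup G) := by
    intro P hP
    have h1 : q ∣ Q'.index := hqI.trans (Subgroup.index_dvd_of_le hQ'leM)
    rw [hP] at h1
    exact P.not_dvd_index h1
  -- Q is normal in M
  have hQnormal : (Q : Subgroup M).Normal :=
    ((isNilpotent_of_finite_tfae (G := M)).out 0 3 rfl rfl).mp hnil q ⟨hq⟩ Q
  -- M normalizes Q'
  haveI hsub : (Q'.subgroupOf M).Normal := by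
    have : Q'.subgroupOf M = (Q : Subgroup M) :=
      Subgroup.comap_map_eq_self_of_injective M.subtype_injective _
    rwa [this]
  have hMnorm : M ≤ Subgroup.normalizer (Q' : Set G) := Subgroup.le_normalizer_of_normal_subgroupOf hQ'leM
  refine ⟨q, ⟨hq⟩, Q, hnotSylow, ?_⟩
  rw [← Subgroup.normalizer_eq_top_iff]
  rcases hMnorm.lt_or_eq with hlt | heq
  · exact hM.2 _ hlt
  -- Suppose N_G(Q') = M; derive a contradiction
  exfalso
  have hQ'p : IsPGroup q Q' := Q.isPGroup'.map M.subtype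
  obtain ⟨P, hQP⟩ := hQ'p.exists_le_sylow
  have hne : Q' ≠ (P : Subgroup G) := hnotSylow P
  -- the normalizer condition inside the q-group P
  have hNC : NormalizerCondition (P : Subgroup G) :=
    @normalizerCondition_of_isNilpotent _ _ P.isPGroup'.isNilpotent
  have hlt2 : Q'.subgroupOf P < ⊤ := by
    rw [lt_top_iff_ne_top]
    intro h
    exact hne (le_antisymm hQP (Subgroup.subgroupOf_eq_top.mp h))
  obtain ⟨x, hx_norm, hx_not⟩ := SetLike.exists_of_lt (hNC _ hlt2)
  -- x normalizes Q' in G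
  have hxnorm : (x : G) ∈ Subgroup.normalizer (Q' : Set G) := by
    rw [Subgroup.mem_normalizer_iff]
    intro h
    constructor
    · intro hh
      have hhP : h ∈ (P : Subgroup G) := hQP hh
      have := (Subgroup.mem_normalizer_iff.mp hx_norm ⟨h, hhP⟩).mp hh
      exact this
    · intro hh
      have hhP : (x : G) * h * (x : G)⁻¹ ∈ (P : Subgroup G) := hQP hh
      have hhP' : h ∈ (P : Subgroup G) := by
        have := mul_mem (mul_mem (inv_mem x.2) hhP) x.2
        simpa [mul_assoc] using this
      have : x * ⟨h, hhP'⟩ * x⁻¹ ∈ Q'.subgroupOf P := by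
        show ((x * ⟨h, hhP'⟩ * x⁻¹ : (P : Subgroup G)) : G) ∈ Q'
        simpa using hh
      exact (Subgroup.mem_normalizer_iff.mp hx_norm ⟨h, hhP'⟩).mpr this
  have hxM : (x : G) ∈ M := by rw [heq]; exact hxnorm
  have hxQ' : (x : G) ∉ Q' := hx_not
  -- x is a q-element
  obtain ⟨k, hk⟩ := P.isPGroup' x
  have hkG : (x : G) ^ q ^ k = 1 := by
    have := congrArg (Subtype.val) hk
    simpa using this
  set x' : M := ⟨(x : G), hxM⟩ with hx'def
  have hZp : IsPGroup q (Subgroup.zpowers x') := by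
    intro g
    obtain ⟨n, hn⟩ := g.2
    refine ⟨k, ?_⟩
    have hx'k : x' ^ q ^ k = 1 := by
      ext
      simpa using hkG
    ext
    have : (g : M) ^ q ^ k = 1 := by
      rw [← hn, ← zpow_natCast, ← zpow_mul, mul_comm, zpow_mul, zpow_natCast, hx'k, one_zpow]
    simpa using congrArg (Subtype.val) this
  haveI := hQnormal
  have hsup : IsPGroup q ((Q : Subgroup M) ⊔ Subgroup.zpowers x' : Subgroup M) :=
    IsPGroup.to_sup_of_normal_left Q.isPGroup' hZp
  have := Q.3 hsup le_sup_left
  have hx'Q : x' ∈ (Q : Subgroup M) := by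
    rw [← this]
    exact (le_sup_right : Subgroup.zpowers x' ≤ _) (Subgroup.mem_zpowers x')
  exact hxQ' ⟨x', hx'Q, rfl⟩
end

section
/- Let A act coprimely on a finite p-solvable group G by automorphisms, and let H be a maximal A-invariant subgroup of G. Then the index |G : H| is either a power of p or coprime to p. -/
open Subgroup

section Helpers

variable {G : Type*} [Group G]

lemma myNormal_subgroupOf_iff {P Q : Subgroup G} (h : P ≤ Q) :
    (P.subgroupOf Q).Normal ↔ ∀ x y : G, x ∈ P → y ∈ Q → y * x * y⁻¹ ∈ P := by
  constructor
  · intro hN x y hx hy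
    have := hN.conj_mem ⟨x, h hx⟩ (by simpa [Subgroup.mem_subgroupOf] using hx) ⟨y, hy⟩
    simpa [Subgroup.mem_subgroupOf] using this
  · intro hh
    constructor
    rintro ⟨x, hxQ⟩ hx ⟨y, hyQ⟩
    simp only [Subgroup.mem_subgroupOf] at hx ⊢
    simpa using hh x y hx hyQ

lemma mySubgroupOf_mono {P Q M : Subgroup G} (h : P ≤ Q) :
    P.subgroupOf M ≤ Q.subgroupOf M := fun _ hx => h hx

lemma mySubgroupOf_subgroupOf_normal {P Q M : Subgroup G} (hPQ : P ≤ Q) (hQM : Q ≤ M)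
    (hN : (P.subgroupOf Q).Normal) :
    ((P.subgroupOf M).subgroupOf (Q.subgroupOf M)).Normal := by
  rw [myNormal_subgroupOf_iff (mySubgroupOf_mono hPQ)]
  intro x y hx hy
  have hpt := (myNormal_subgroupOf_iff hPQ).mp hN
  simp only [Subgroup.mem_subgroupOf] at hx hy ⊢
  simpa using hpt x y hx hy

lemma myCard_map_inj {K : Subgroup G} {H : Type*} [Group H] (f : G →* H)
    (hf : Function.Injective f) : Nat.card (K.map f) = Nat.card K :=
  (Nat.card_congr (K.equivMapOfInjective f hf).toEquiv).symm

lemma myCard_sup_dvd [Finite G] (P Q : Subgroup G) (hQ : Q.Normal) :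
    Nat.card ↥(P ⊔ Q) ∣ Nat.card P * Nat.card Q := by
  haveI := hQ
  have h1 : (Q.subgroupOf (P ⊔ Q)).index * Nat.card (Q.subgroupOf (P ⊔ Q))
      = Nat.card ↥(P ⊔ Q) := Subgroup.index_mul_card _
  have h2 : Nat.card (Q.subgroupOf (P ⊔ Q)) = Nat.card Q :=
    Nat.card_congr (Subgroup.subgroupOfEquivOfLe le_sup_right).toEquiv
  have h3 : (Q.subgroupOf (P ⊔ Q)).index = Q.relIndex P := Subgroup.relIndex_sup_right P Q
  have h4 : Q.relIndex P ∣ Nat.card P := Subgroup.index_dvd_card _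
  rw [← h1, h2, h3]
  exact mul_dvd_mul h4 dvd_rfl

end Helpers

section Core

variable (D : ℕ → Prop)

def myCore (G : Type*) [Group G] : Subgroup G :=
  sSup {K : Subgroup G | K.Normal ∧ D (Nat.card K)}

variable {G : Type*} [Group G]

lemma le_myCore {K : Subgroup G} (h1 : K.Normal) (h2 : D (Nat.card K)) :
    K ≤ myCore D G := le_sSup ⟨h1, h2⟩

lemma myCore_inv (e : G ≃* G) {x : G} (hx : x ∈ myCore D G) : e x ∈ myCore D G := by
  have h : myCore D G ≤ Subgroup.comap (e : G →* G) (myCore D G) := by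
    refine sSup_le fun K hK => ?_
    rw [← Subgroup.map_le_iff_le_comap]
    exact le_myCore D (hK.1.map _ e.surjective)
      (by rw [myCard_map_inj _ e.injective]; exact hK.2)
  exact h hx

lemma myCore_spec [Finite G] (hD1 : D 1)
    (hDmul : ∀ m n k : ℕ, D m → D n → k ∣ m * n → D k) :
    (myCore D G).Normal ∧ D (Nat.card (myCore D G)) := by
  classical
  haveI : Finite (Subgroup G) :=
    Finite.of_injective (fun K : Subgroup G => (K : Set G)) SetLike.coe_injective
  haveI : Fintype (Subgroup G) := Fintype.ofFinite _
  set f : Subgroup G → Subgroup G :=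
    fun K => if K.Normal ∧ D (Nat.card K) then K else ⊥ with hf
  have hsup : myCore D G = Finset.univ.sup f := by
    apply le_antisymm
    · refine sSup_le fun K hK => ?_
      have : f K = K := if_pos hK
      exact this ▸ Finset.le_sup (Finset.mem_univ K)
    · refine Finset.sup_le fun K _ => ?_
      by_cases h : K.Normal ∧ D (Nat.card K)
      · rw [hf]; simp only [if_pos h]; exact le_sSup h
      · rw [hf]; simp only [if_neg h]; exact bot_le
  have hbot : (⊥ : Subgroup G).Normal ∧ D (Nat.card (⊥ : Subgroup G)) :=
    ⟨inferInstance, by rw [Subgroup.card_bot]; exact hD1⟩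
  rw [hsup]
  refine Finset.sup_induction (p := fun K : Subgroup G => K.Normal ∧ D (Nat.card K)) hbot ?_ ?_
  · intro a ha b hb
    haveI := ha.1; haveI := hb.1
    exact ⟨Subgroup.sup_normal a b, hDmul _ _ _ ha.2 hb.2 (myCard_sup_dvd a b hb.1)⟩
  · intro K _
    by_cases h : K.Normal ∧ D (Nat.card K)
    · rw [hf]; simpa only [if_pos h] using h
    · rw [hf]; simpa only [if_neg h] using hbot

end Core

universe u

lemma myCore_ne_bot (D : ℕ → Prop) (hD1 : D 1)
    (hDmul : ∀ m n k : ℕ, D m → D n → k ∣ m * n → D k) :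
    ∀ (c : ℕ) (G : Type u) [Group G] [Finite G], Nat.card G ≤ c →
    ∀ (t : ℕ → Subgroup G), (∀ i, t i ≤ t (i + 1) ∧ ((t i).subgroupOf (t (i + 1))).Normal) →
    ∀ j : ℕ, t j ≠ ⊥ → D (Nat.card (t j)) →
    ∀ m : ℕ, t m = ⊤ → myCore D G ≠ ⊥ := by
  intro c
  induction c with
  | zero =>
    intro G _ _ hc
    exfalso
    have := Nat.card_pos (α := G)
    omega
  | succ c ihc =>
    intro G _ _ hc t hchain j hj hDj
    have hmono : Monotone t := monotone_nat_of_le_succ fun i => (hchain i).1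
    have toptrick : t j = ⊤ → myCore D G ≠ ⊥ := by
      intro hjt hbot
      rw [hjt] at hj hDj
      have h2 : (⊤ : Subgroup G) ≤ ⊥ := hbot ▸ le_myCore D inferInstance hDj
      exact hj (le_bot_iff.mp h2)
    intro m
    induction m with
    | zero =>
      intro hm
      exact toptrick (top_le_iff.mp (hm ▸ hmono (Nat.zero_le j)))
    | succ m ihm =>
      intro hm
      by_cases hjt : t j = ⊤
      · exact toptrick hjt
      by_cases hMt : t m = ⊤
      · exact ihm hMt
      -- main case
      have hjm : j ≤ m := by
        by_contra h
        push_neg at h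
        exact hjt (top_le_iff.mp (hm ▸ hmono h))
      have hMnorm : (t m).Normal := by
        have hpt := (myNormal_subgroupOf_iff (hchain m).1).mp (hchain m).2
        exact ⟨fun x hx g => hpt x g hx (by rw [hm]; trivial)⟩
      haveI := hMnorm
      set M : Subgroup G := t m with hMdef
      set t' : ℕ → Subgroup ↥M := fun i => (t i ⊓ t m).subgroupOf M with ht'
      have hchain' : ∀ i, t' i ≤ t' (i + 1) ∧ ((t' i).subgroupOf (t' (i + 1))).Normal := by
        intro i
        have hle : t i ⊓ t m ≤ t (i + 1) ⊓ t m := inf_le_inf_right (t m) (hchain i).1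
        constructor
        · exact mySubgroupOf_mono hle
        · refine mySubgroupOf_subgroupOf_normal hle inf_le_right ?_
          rw [myNormal_subgroupOf_iff hle]
          intro x y hx hy
          have hpt := (myNormal_subgroupOf_iff (hchain i).1).mp (hchain i).2
          rw [Subgroup.mem_inf] at hx hy ⊢
          exact ⟨hpt x y hx.1 hy.1, mul_mem (mul_mem hy.2 hx.2) (inv_mem hy.2)⟩
      have hjinf : t j ⊓ t m = t j := inf_eq_left.mpr (hmono hjm)
      have hj' : t' j ≠ ⊥ := by
        simp only [ht', hjinf]
        intro h
        exact hj ((Subgroup.subgroupOf_eq_bot.mp h).eq_bot_of_le (hmono hjm))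
      have hDj' : D (Nat.card (t' j)) := by
        have hcc : Nat.card ((t j).subgroupOf M) = Nat.card (t j) :=
          Nat.card_congr (Subgroup.subgroupOfEquivOfLe (hmono hjm)).toEquiv
        simp only [ht', hjinf]
        rw [hcc]; exact hDj
      have hm' : t' m = ⊤ := by
        simp only [ht', inf_idem]
        exact Subgroup.subgroupOf_self M
      have hcard' : Nat.card ↥M ≤ c := by
        have hd : Nat.card ↥M ∣ Nat.card G := Subgroup.card_subgroup_dvd_card M
        have hne : Nat.card ↥M ≠ Nat.card G := fun h => hMt (Subgroup.eq_top_of_card_eq M h)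
        have hpos : 0 < Nat.card G := Nat.card_pos
        have := Nat.le_of_dvd hpos hd
        omega
      have hcore' : myCore D ↥M ≠ ⊥ := ihc ↥M hcard' t' hchain' j hj' hDj' m hm'
      set K : Subgroup G := (myCore D ↥M).map M.subtype with hK
      have hKnorm : K.Normal := by
        constructor
        rintro _ ⟨y, hy, rfl⟩ g
        have h2 : MulAut.conjNormal g y ∈ myCore D ↥M :=
          myCore_inv D (MulAut.conjNormal g) hy
        refine ⟨MulAut.conjNormal g y, h2, ?_⟩
        simp [MulAut.conjNormal_apply]
      have hKD : D (Nat.card K) := by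
        rw [hK, myCard_map_inj M.subtype M.subtype_injective]
        exact (myCore_spec D hD1 hDmul (G := ↥M)).2
      have hKne : K ≠ ⊥ := fun h =>
        hcore' ((Subgroup.map_eq_bot_iff_of_injective _ M.subtype_injective).mp h)
      intro hbot
      exact hKne (le_bot_iff.mp (hbot ▸ le_myCore D hKnorm hKD))

/-- A finite group is `p`-solvable if it has a normal series (each term normal in the next)
whose factors are `p`-groups or `p'`-groups. -/
def IsPSolvable (p : ℕ) (G : Type*) [Group G] : Prop :=
  ∃ (n : ℕ) (s : Fin (n + 1) → Subgroup G),
    s 0 = ⊥ ∧ s (Fin.last n) = ⊤ ∧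
    ∀ i : Fin n, s i.castSucc ≤ s i.succ ∧
      ∃ hN : ((s i.castSucc).subgroupOf (s i.succ)).Normal,
        haveI := hN
        IsPGroup p ((s i.succ) ⧸ (s i.castSucc).subgroupOf (s i.succ)) ∨
          ¬ p ∣ Nat.card ((s i.succ) ⧸ (s i.castSucc).subgroupOf (s i.succ))

section Quotient

variable {G : Type*} [Group G]

/-- The factor of a mapped step is a surjective image of the original factor. -/
lemma myFactor_surjective {P Q : Subgroup G} (hle : P ≤ Q) (hN : (P.subgroupOf Q).Normal)
    {G' : Type*} [Group G'] (π : G →* G')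
    (hN' : ((P.map π).subgroupOf (Q.map π)).Normal) :
    ∃ F : (Q ⧸ (haveI := hN; P.subgroupOf Q)) →*
        ((Q.map π) ⧸ (haveI := hN'; (P.map π).subgroupOf (Q.map π))),
      Function.Surjective F := by
  haveI := hN; haveI := hN'
  let F0 : ↥Q →* ((Q.map π) ⧸ (P.map π).subgroupOf (Q.map π)) :=
    (QuotientGroup.mk' _).comp (π.subgroupMap Q)
  have hker : ∀ x ∈ P.subgroupOf Q, F0 x = 1 := by
    intro x hx
    rw [Subgroup.mem_subgroupOf] at hx
    have : (π.subgroupMap Q) x ∈ (P.map π).subgroupOf (Q.map π) := by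
      rw [Subgroup.mem_subgroupOf]
      exact ⟨(x : G), hx, rfl⟩
    simpa [F0, QuotientGroup.eq_one_iff] using this
  refine ⟨QuotientGroup.lift _ F0 hker, ?_⟩
  have hF0 : Function.Surjective F0 :=
    (QuotientGroup.mk'_surjective _).comp (π.subgroupMap_surjective Q)
  intro z
  obtain ⟨y, hy⟩ := hF0 z
  exact ⟨QuotientGroup.mk y, hy⟩

lemma myIsPSolvable_quotient (p : ℕ) (M : Subgroup G) [M.Normal] (h : IsPSolvable p G) :
    IsPSolvable p (G ⧸ M) := by
  obtain ⟨n, s, h0, hlast, hstep⟩ := h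
  set π := QuotientGroup.mk' M with hπ
  refine ⟨n, fun i => (s i).map π,
    by show (s 0).map π = ⊥; rw [h0]; exact Subgroup.map_bot π,
    by show (s (Fin.last n)).map π = ⊤
       rw [hlast]; exact Subgroup.map_top_of_surjective π (QuotientGroup.mk'_surjective M),
    fun i => ?_⟩
  show ((s i.castSucc).map π ≤ (s i.succ).map π) ∧ _
  obtain ⟨hle, hN, hfac⟩ := hstep i
  have hle' : (s i.castSucc).map π ≤ (s i.succ).map π := Subgroup.map_mono hle
  have hpt := (myNormal_subgroupOf_iff hle).mp hN
  have hN' : (((s i.castSucc).map π).subgroupOf ((s i.succ).map π)).Normal := by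
    rw [myNormal_subgroupOf_iff hle']
    rintro _ _ ⟨a, ha, rfl⟩ ⟨b, hb, rfl⟩
    exact ⟨b * a * b⁻¹, hpt a b ha hb, by simp⟩
  obtain ⟨F, hF⟩ := myFactor_surjective hle hN π hN'
  refine ⟨hle', hN', ?_⟩
  rcases hfac with hpg | hnd
  · exact Or.inl (hpg.of_surjective F hF)
  · exact Or.inr fun hdvd => hnd (hdvd.trans (Subgroup.card_dvd_of_surjective F hF))

variable {A : Type*} [Group A]

lemma myMap_eq (φ : A →* MulAut G) (M : Subgroup G)
    (hinv : ∀ (a : A) (x : G), x ∈ M → φ a x ∈ M) (a : A) :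
    M.map ((φ a : G ≃* G) : G →* G) = M := by
  apply le_antisymm
  · rintro _ ⟨x, hx, rfl⟩
    exact hinv a x hx
  · intro x hx
    refine ⟨φ a⁻¹ x, hinv a⁻¹ x hx, ?_⟩
    simp [map_inv]

/-- The induced action on the quotient by an invariant normal subgroup. -/
def myQuotAct (φ : A →* MulAut G) (M : Subgroup G) [M.Normal]
    (hinv : ∀ (a : A) (x : G), x ∈ M → φ a x ∈ M) : A →* MulAut (G ⧸ M) where
  toFun a := QuotientGroup.congr M M (φ a) (myMap_eq φ M hinv a)
  map_one' := by
    ext q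
    induction q using QuotientGroup.induction_on with
    | H x => simp [QuotientGroup.congr_mk]
  map_mul' a b := by
    ext q
    induction q using QuotientGroup.induction_on with
    | H x => simp [QuotientGroup.congr_mk]

lemma myQuotAct_mk (φ : A →* MulAut G) (M : Subgroup G) [M.Normal]
    (hinv : ∀ (a : A) (x : G), x ∈ M → φ a x ∈ M) (a : A) (x : G) :
    myQuotAct φ M hinv a (QuotientGroup.mk x) = QuotientGroup.mk (φ a x) := rfl

end Quotient

lemma myMain {A : Type*} [Group A] (p : ℕ) (hp : p.Prime) :
    ∀ (c : ℕ) (G : Type u) [Group G] [Finite G] (φ : A →* MulAut G), Nat.card G ≤ c →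
    IsPSolvable p G → ∀ H : Subgroup G,
    (∀ (a : A) (x : G), x ∈ H → φ a x ∈ H) → H ≠ ⊤ →
    (∀ K : Subgroup G, (∀ (a : A) (x : G), x ∈ K → φ a x ∈ K) → H < K → K = ⊤) →
    ((∃ k : ℕ, H.index = p ^ k) ∨ Nat.Coprime p H.index) := by
  intro c
  induction c with
  | zero =>
    intro G _ _ φ hc
    exfalso
    have := Nat.card_pos (α := G)
    omega
  | succ c ih =>
    intro G _ _ φ hc hps H hHinv hHne hHmax
    by_cases hcard : Nat.card G ≤ 1
    · right
      have h1 : H.index ∣ Nat.card G := H.index_dvd_card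
      have : H.index = 1 := by
        have := Nat.card_pos (α := G)
        interval_cases h : (Nat.card G) <;> simpa [h] using h1
      rw [this]
      exact Nat.coprime_one_right p
    push_neg at hcard
    obtain ⟨n, s, h0, hlast, hstep⟩ := id hps
    -- ℕ-indexed version of the series
    set t : ℕ → Subgroup G := fun k => s ⟨min k n, by omega⟩ with htdef
    have hchain : ∀ i, t i ≤ t (i + 1) ∧ ((t i).subgroupOf (t (i + 1))).Normal := by
      intro i
      rcases lt_or_ge i n with hi | hi
      · have e1 : t i = s (⟨i, hi⟩ : Fin n).castSucc := by
          simp only [htdef]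
          congr 1
          exact Fin.ext (by simp [Nat.min_eq_left hi.le])
        have e2 : t (i + 1) = s (⟨i, hi⟩ : Fin n).succ := by
          simp only [htdef]
          congr 1
          exact Fin.ext (by simp [Nat.min_eq_left hi])
        rw [e1, e2]
        exact ⟨(hstep ⟨i, hi⟩).1, (hstep ⟨i, hi⟩).2.choose⟩
      · have e : t i = t (i + 1) := by
          simp only [htdef]
          congr 1
          exact Fin.ext (by simp [Nat.min_eq_right hi, Nat.min_eq_right (hi.trans (Nat.le_succ i))])
        refine ⟨le_of_eq e, ?_⟩
        rw [e, Subgroup.subgroupOf_self]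
        infer_instance
    have hmono : Monotone t := monotone_nat_of_le_succ fun i => (hchain i).1
    have ht0 : t 0 = ⊥ := by
      simp only [htdef]
      rw [show (⟨min 0 n, by omega⟩ : Fin (n + 1)) = 0 from Fin.ext (by simp)]
      exact h0
    have htn : t n = ⊤ := by
      simp only [htdef]
      rw [show (⟨min n n, by omega⟩ : Fin (n + 1)) = Fin.last n from Fin.ext (by simp)]
      exact hlast
    have htop_ne : t n ≠ ⊥ := by
      rw [htn]
      intro h
      have := Subgroup.card_top (G := G)
      rw [h, Subgroup.card_bot] at this
      omega
    classical
    have hex : ∃ k, t k ≠ ⊥ := ⟨n, htop_ne⟩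
    set j := Nat.find hex with hjdef
    have hj : t j ≠ ⊥ := Nat.find_spec hex
    have hj0 : j ≠ 0 := fun h => hj (h ▸ ht0)
    have hjn : j ≤ n := Nat.find_le htop_ne
    have hjprev : t (j - 1) = ⊥ := by
      have := Nat.find_min hex (m := j - 1) (by omega)
      simpa using this
    -- the step of the series at j-1
    have hj1n : j - 1 < n := by omega
    set i0 : Fin n := ⟨j - 1, hj1n⟩ with hi0
    have ecs : s i0.castSucc = t (j - 1) := by
      simp only [htdef]
      congr 1
      exact Fin.ext (by simp [hi0, Nat.min_eq_left (by omega : j - 1 ≤ n)])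
    have esc : s i0.succ = t j := by
      simp only [htdef]
      congr 1
      exact Fin.ext (by simp [hi0, Nat.min_eq_left hjn]; omega)
    obtain ⟨hle0, hN0, hfac0⟩ := hstep i0
    haveI := hN0
    have hbot' : (s i0.castSucc).subgroupOf (s i0.succ) = ⊥ := by
      rw [ecs, hjprev]
      exact Subgroup.bot_subgroupOf _
    let e1 : ((s i0.succ) ⧸ (s i0.castSucc).subgroupOf (s i0.succ)) ≃* ↥(s i0.succ) :=
      (QuotientGroup.quotientMulEquivOfEq hbot').trans QuotientGroup.quotientBot
    -- the key continuation, abstracted over the divisor class D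
    have key : ∀ D : ℕ → Prop, D 1 → (∀ m n k : ℕ, D m → D n → k ∣ m * n → D k) →
        D (Nat.card (t j)) →
        (∀ k l : ℕ, D k → l ∣ k → ((∃ i : ℕ, l = p ^ i) ∨ Nat.Coprime p l)) →
        ((∃ k : ℕ, H.index = p ^ k) ∨ Nat.Coprime p H.index) := by
      intro D hD1 hDmul hDj hDgoal
      have hMspec := myCore_spec D hD1 hDmul (G := G)
      haveI hMnormal : (myCore D G).Normal := hMspec.1
      set M := myCore D G with hMdef
      have hMne : M ≠ ⊥ :=
        myCore_ne_bot D hD1 hDmul (Nat.card G) G le_rfl t hchain j hj hDj n htn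
      have hMinv : ∀ (a : A) (x : G), x ∈ M → φ a x ∈ M := fun a x hx =>
        myCore_inv D (φ a) hx
      by_cases hMH : M ≤ H
      · -- pass to the quotient G ⧸ M
        set π := QuotientGroup.mk' M with hπ
        have hπs : Function.Surjective π := QuotientGroup.mk'_surjective M
        set φ' := myQuotAct φ M hMinv with hφ'
        set H' := H.map π with hH'
        have hH'inv : ∀ (a : A) (x' : G ⧸ M), x' ∈ H' → φ' a x' ∈ H' := by
          rintro a _ ⟨x, hx, rfl⟩
          exact ⟨φ a x, hHinv a x hx, rfl⟩
        have hcomapH : Subgroup.comap π H' = H := by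
          rw [hH', Subgroup.comap_map_eq, QuotientGroup.ker_mk', sup_of_le_left hMH]
        have hH'ne : H' ≠ ⊤ := by
          intro h
          apply hHne
          rw [← hcomapH, h, Subgroup.comap_top]
        have hH'max : ∀ K' : Subgroup (G ⧸ M),
            (∀ (a : A) (x' : G ⧸ M), x' ∈ K' → φ' a x' ∈ K') → H' < K' → K' = ⊤ := by
          intro K' hK'inv hlt
          have hKinv : ∀ (a : A) (x : G), x ∈ K'.comap π → φ a x ∈ K'.comap π := by
            intro a x hx
            have := hK'inv a (π x) hx
            exact this
          have hHK : H < K'.comap π := by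
            rw [← hcomapH]
            refine lt_of_le_of_ne (Subgroup.comap_mono hlt.le) ?_
            intro h
            have := congrArg (Subgroup.map π) h
            rw [Subgroup.map_comap_eq_self_of_surjective hπs,
              Subgroup.map_comap_eq_self_of_surjective hπs] at this
            exact hlt.ne' this.symm
          have := hHmax _ hKinv hHK
          rw [← Subgroup.map_comap_eq_self_of_surjective hπs K', this,
            Subgroup.map_top_of_surjective π hπs]
        have hMbig : 1 < Nat.card M := (Subgroup.one_lt_card_iff_ne_bot M).mpr hMne
        have hGeq : Nat.card G = Nat.card (G ⧸ M) * Nat.card M :=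
          Subgroup.card_eq_card_quotient_mul_card_subgroup M
        have hqpos : 0 < Nat.card (G ⧸ M) := Nat.card_pos
        have hqlt : Nat.card (G ⧸ M) < Nat.card G := by
          calc Nat.card (G ⧸ M) < Nat.card (G ⧸ M) * Nat.card M := by
                have := Nat.mul_le_mul_left (Nat.card (G ⧸ M)) hMbig
                omega
            _ = Nat.card G := hGeq.symm
        have hrec := ih (G ⧸ M) φ' (by omega)
          (myIsPSolvable_quotient p M hps) H' hH'inv hH'ne hH'max
        have hidx : H'.index = H.index :=
          Subgroup.index_map_eq H hπs (by rw [QuotientGroup.ker_mk']; exact hMH)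
        rwa [hidx] at hrec
      · -- H ⊔ M = ⊤ and the index divides |M|
        have hHMinv : ∀ (a : A) (x : G), x ∈ H ⊔ M → φ a x ∈ H ⊔ M := by
          intro a x hx
          have h1 : (H ⊔ M).map ((φ a : G ≃* G) : G →* G) ≤ H ⊔ M := by
            rw [Subgroup.map_sup]
            refine sup_le ?_ ?_
            · rintro _ ⟨y, hy, rfl⟩
              exact Subgroup.mem_sup_left (hHinv a y hy)
            · rintro _ ⟨y, hy, rfl⟩
              exact Subgroup.mem_sup_right (hMinv a y hy)
          exact h1 ⟨x, hx, rfl⟩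
        have hHM : H ⊔ M = ⊤ := hHmax _ hHMinv (left_lt_sup.mpr hMH)
        have hdvd1 : Nat.card G ∣ Nat.card H * Nat.card M := by
          have := myCard_sup_dvd H M hMnormal
          rwa [hHM, Subgroup.card_top] at this
        have hdvd2 : H.index ∣ Nat.card M := by
          have h1 : H.index * Nat.card H = Nat.card G := Subgroup.index_mul_card H
          have h2 : H.index * Nat.card H ∣ Nat.card H * Nat.card M := h1 ▸ hdvd1
          rw [mul_comm (Nat.card H) (Nat.card M)] at h2
          have hHpos : 0 < Nat.card H := Nat.card_pos
          exact (Nat.mul_dvd_mul_iff_right hHpos).mp h2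
        exact hDgoal (Nat.card M) H.index hMspec.2 hdvd2
    -- now branch on the type of the factor at step j-1
    haveI : Fact p.Prime := ⟨hp⟩
    rcases hfac0 with hpg | hnd
    · -- p-group factor
      refine key (fun k => ∃ i : ℕ, k = p ^ i) ⟨0, by simp⟩ ?_ ?_ ?_
      · rintro m' n' k ⟨a, rfl⟩ ⟨b, rfl⟩ hk
        rw [← pow_add] at hk
        obtain ⟨i, _, hi⟩ := (Nat.dvd_prime_pow hp).mp hk
        exact ⟨i, hi⟩
      · have h1 : IsPGroup p ↥(s i0.succ) := hpg.of_equiv e1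
        rw [esc] at h1
        exact h1.exists_card_eq
      · rintro k l ⟨i, rfl⟩ hl
        obtain ⟨i', _, hi'⟩ := (Nat.dvd_prime_pow hp).mp hl
        exact Or.inl ⟨i', hi'⟩
    · -- p'-group factor
      refine key (fun k => ¬ p ∣ k) (fun h => Nat.Prime.ne_one hp (Nat.dvd_one.mp h)) ?_ ?_ ?_
      · intro m' n' k hm' hn' hk hpk
        rcases (Nat.Prime.dvd_mul hp).mp (hpk.trans hk) with h | h
        · exact hm' h
        · exact hn' h
      · have hcc : Nat.card ↥(s i0.succ) =
            Nat.card ((s i0.succ) ⧸ (s i0.castSucc).subgroupOf (s i0.succ)) :=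
          (Nat.card_congr e1.toEquiv).symm
        show ¬ p ∣ Nat.card (t j)
        rw [← esc, hcc]
        exact hnd
      · intro k l hk hl
        exact Or.inr ((Nat.Prime.coprime_iff_not_dvd hp).mpr fun h => hk (h.trans hl))

theorem stmt_6 (A G : Type*) [Group A] [Group G] [Finite A] [Finite G]
    (φ : A →* MulAut G) (hco : (Nat.card A).Coprime (Nat.card G))
    (p : ℕ) (hp : p.Prime) (hps : IsPSolvable p G)
    (H : Subgroup G)
    (hHinv : ∀ (a : A) (x : G), x ∈ H → φ a x ∈ H)
    (hHne : H ≠ ⊤)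
    (hHmax : ∀ K : Subgroup G, (∀ (a : A) (x : G), x ∈ K → φ a x ∈ K) → H < K → K = ⊤) :
    (∃ k : ℕ, H.index = p ^ k) ∨ Nat.Coprime p H.index :=
  myMain p hp (Nat.card G) G φ le_rfl hps H hHinv hHne hHmax
end

section
/- Let G be a finite group that is not nilpotent but every maximal subgroup containing the normalizer of some Sylow subgroup is nilpotent. Then G has at least one non-normal Sylow subgroup Q, and N_G(Q) is a nilpotent maximal subgroup of G. -/
theorem stmt_12 (G : Type*) [Group G] [Finite G]
    (hG : ¬ Group.IsNilpotent G)
    (h : ∀ M : Subgroup G, IsCoatom M →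
      (∃ (p : ℕ) (_ : Fact p.Prime) (P : Sylow p G), Subgroup.normalizer ((P : Subgroup G) : Set G) ≤ M) →
      Group.IsNilpotent M) :
    ∃ (q : ℕ) (_ : Fact q.Prime) (Q : Sylow q G),
      ¬ (Q : Subgroup G).Normal ∧
      Group.IsNilpotent (Subgroup.normalizer ((Q : Subgroup G) : Set G)) ∧
      IsCoatom (Subgroup.normalizer ((Q : Subgroup G) : Set G)) := by
  -- First find a non-normal Sylow subgroup
  have hnontriv : ∃ (q : ℕ) (_ : Fact q.Prime) (Q : Sylow q G), ¬ (Q : Subgroup G).Normal := by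
    by_contra hc
    push_neg at hc
    apply hG
    exact ((isNilpotent_of_finite_tfae (G := G)).out 3 0).mp
      (fun p hp P => hc p hp P)
  obtain ⟨q, hq, Q, hQ⟩ := hnontriv
  refine ⟨q, hq, Q, hQ, ?_⟩
  -- N(Q) is proper
  have hne : Subgroup.normalizer ((Q : Subgroup G) : Set G) ≠ ⊤ := fun ht => hQ (Subgroup.normalizer_eq_top_iff.mp ht)
  obtain ⟨M, hM, hNM⟩ := ((eq_top_or_exists_le_coatom (Subgroup.normalizer ((Q : Subgroup G) : Set G))).resolve_left hne)
  have hMnil : Group.IsNilpotent M := h M hM ⟨q, hq, Q, hNM⟩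
  have hQM : (Q : Subgroup G) ≤ M := Subgroup.le_normalizer.trans hNM
  -- Q, viewed as a Sylow subgroup of M, is normal in M since M is nilpotent
  have hQ' : ((Q : Subgroup G).subgroupOf M).Normal := by
    have h4 : ∀ (p : ℕ) (_ : Fact p.Prime) (P : Sylow p M), (P : Subgroup M).Normal :=
      ((isNilpotent_of_finite_tfae (G := M)).out 0 3).mp hMnil
    have := h4 q hq (Q.subtype hQM)
    rwa [Sylow.coe_subtype] at this
  have hMle : M ≤ Subgroup.normalizer ((Q : Subgroup G) : Set G) :=
    Subgroup.le_normalizer_of_normal_subgroupOf hQM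
  have heq : Subgroup.normalizer ((Q : Subgroup G) : Set G) = M := le_antisymm hNM hMle
  rw [heq]
  exact ⟨hMnil, hM⟩
end

section
/- Let G = (P₁ × ⋯ × P_{s-1}) × (P_s ⋊ (Q₁ × ⋯ × Q_t)) be a finite group, where P₁,…,P_s are normal Sylow subgroups of G (s ≥ 1), Q₁,…,Q_t are non-normal Sylow subgroups of G (t ≥ 1), and there exists a subgroup E of P_s normal in G such that E(Q₁ × ⋯ × Q_t) is a nilpotent maximal subgroup of P_s ⋊ (Q₁ × ⋯ × Q_t). Then every maximal subgroup of G containing the normalizer of some Sylow subgroup of G is nilpotent. -/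
/-!
Let `r` be a prime and `R` a Sylow `r`-subgroup whose normalizer lies in the maximal subgroup
`M`. Then `R` is not normal, so `r` is none of the `pᵢ`; since `|G|` divides `∏ |Pᵢ| · ∏ |Qⱼ|`,
`r = q_j` and `R` is conjugate to `Q_j`. Put `N = ∏_{i ≠ s} Pᵢ`, `K = Q₁ ⋯ Q_t` and
`D = N · E · K`. The subgroup `D` is nilpotent, being the product of the nilpotent subgroups `N`
and `EK`, which centralize each other. It is maximal in `G`: as `N` is normal and `N · P_s K = G`,
every subgroup `X ⊇ N` equals `N · (X ∩ P_s K)`, so maximality of `EK` in `P_s K` lifts to `D`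
(and `D ≠ G` because `Q_j` is not normal). Finally `D` normalizes `Q_j`: `N` centralizes it,
`E` centralizes it inside the nilpotent group `EK`, and `K = Q_j × ∏_{j' ≠ j} Q_{j'}`. Hence a
conjugate of `D` lies in `N_G(R) ≤ M`, so `M` is that conjugate and is nilpotent.
-/

open Subgroup
open scoped Pointwise

namespace Subgroup

variable {G : Type*} [Group G]

theorem isNilpotent_iSup_of_commute {ι : Type*} [Finite ι] {H : ι → Subgroup G}
    (hcomm : Pairwise fun i j => ∀ x y : G, x ∈ H i → y ∈ H j → Commute x y)
    [∀ i, Group.IsNilpotent (H i)] : Group.IsNilpotent ↥(⨆ i, H i) := by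
  have := Fintype.ofFinite ι
  rw [← noncommPiCoprod_range (hcomm := hcomm)]
  exact Group.nilpotent_of_surjective _ (noncommPiCoprod hcomm).rangeRestrict_surjective

theorem card_iSup_dvd_prod_card_of_commute {ι : Type*} [Fintype ι] {H : ι → Subgroup G}
    (hcomm : Pairwise fun i j => ∀ x y : G, x ∈ H i → y ∈ H j → Commute x y) :
    Nat.card ↥(⨆ i, H i) ∣ ∏ i, Nat.card (H i) := by
  rw [← noncommPiCoprod_range (hcomm := hcomm), ← Nat.card_pi]
  exact card_dvd_of_surjective _ (noncommPiCoprod hcomm).rangeRestrict_surjective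

theorem isNilpotent_sup_of_le_centralizer {A B : Subgroup G} (hAB : A ≤ centralizer B)
    [Group.IsNilpotent A] [Group.IsNilpotent B] : Group.IsNilpotent ↥(A ⊔ B) := by
  let f := A.subtype.noncommCoprod B.subtype fun a b =>
    (mem_centralizer_iff.mp (hAB a.2) b b.2).symm
  have hf : f.range = A ⊔ B := by
    refine le_antisymm ?_ (sup_le (fun a ha => ⟨(⟨a, ha⟩, 1), mul_one a⟩)
      (fun b hb => ⟨(1, ⟨b, hb⟩), one_mul b⟩))
    rintro _ ⟨⟨a, b⟩, rfl⟩
    exact mul_mem (mem_sup_left a.2) (mem_sup_right b.2)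
  exact hf ▸ Group.nilpotent_of_surjective _ f.rangeRestrict_surjective

theorem card_dvd_card_mul_card_of_sup_eq_top {N H : Subgroup G} [N.Normal] (hNH : N ⊔ H = ⊤) :
    Nat.card G ∣ Nat.card N * Nat.card H := by
  rw [← N.card_mul_index, ← relIndex_top_right, ← hNH, relIndex_sup_left]
  exact mul_dvd_mul_left _ (relIndex_dvd_card N H)

theorem sup_inf_eq_of_sup_eq_top {N H X : Subgroup G} [N.Normal] (hNH : N ⊔ H = ⊤)
    (hNX : N ≤ X) : N ⊔ H ⊓ X = X := by
  refine SetLike.coe_injective ?_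
  rw [normal_mul, mul_inf_assoc _ _ _ hNX, ← normal_mul, hNH, coe_top, Set.univ_inter]

theorem isCoatom_sup_of_isCoatom_subgroupOf {N H L : Subgroup G} [N.Normal] (hNH : N ⊔ H = ⊤)
    (hLH : L ≤ H) (hL : IsCoatom (L.subgroupOf H)) (hne : N ⊔ L ≠ ⊤) :
    IsCoatom (N ⊔ L) := by
  refine ⟨hne, fun X hX => ?_⟩
  have hLX : L.subgroupOf H ≤ X.subgroupOf H := subgroupOf_mono _ (le_sup_right.trans hX.le)
  rcases hL.le_iff.mp hLX with hXH | hXL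
  · rw [eq_top_iff, ← hNH]
    exact sup_le (le_sup_left.trans hX.le) (subgroupOf_eq_top.mp hXH)
  · rw [subgroupOf_inj, inf_of_le_left hLH] at hXL
    rw [← sup_inf_eq_of_sup_eq_top hNH (le_sup_left.trans hX.le), inf_comm, hXL] at hX
    exact absurd hX (lt_irrefl _)

theorem isNilpotent_of_isCoatom_of_normalizer_conj_le {D H M : Subgroup G} (hD : IsCoatom D)
    [Group.IsNilpotent D] (hDH : D ≤ normalizer (H : Set G)) (hM : IsCoatom M) (g : G)
    (hHM : normalizer ((MulAut.conj g • H : Subgroup G) : Set G) ≤ M) :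
    Group.IsNilpotent M := by
  let e : Subgroup G ≃o Subgroup G := (MulAut.conj g).mapSubgroup
  have hDM : e D ≤ M :=
    ((map_mono hDH).trans (map_equiv_normalizer_eq H (MulAut.conj g)).le).trans hHM
  obtain rfl : M = e D :=
    (((e.isCoatom_iff D).mpr hD).le_iff.mp hDM).resolve_left hM.1
  exact Group.nilpotent_of_mulEquiv ((MulAut.conj g).subgroupMap D)

theorem iSup_le_normalizer_of_commute {ι : Type*} {H : ι → Subgroup G}
    (hcomm : Pairwise fun i j => ∀ x y : G, x ∈ H i → y ∈ H j → Commute x y) (j : ι) :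
    ⨆ i, H i ≤ normalizer (H j : Set G) := by
  refine iSup_le fun i => ?_
  rcases eq_or_ne i j with rfl | hij
  · exact le_normalizer
  · refine le_trans (fun x hx => ?_) (centralizer_le_normalizer _)
    exact mem_centralizer_iff.mpr fun y hy => (hcomm hij x y hx hy).eq.symm

theorem ne_top_of_isNilpotent_of_not_normal [Finite G] {H : Subgroup G} [Group.IsNilpotent H]
    {p : ℕ} [Fact p.Prime] (P : Sylow p G) (hP : ¬ (P : Subgroup G).Normal) : H ≠ ⊤ := by
  rintro rfl
  have : Group.IsNilpotent G := Group.nilpotent_of_mulEquiv topEquiv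
  exact hP inferInstance

end Subgroup

theorem IsPGroup.le_centralizer_of_isNilpotent {G : Type*} [Group G] [Finite G] {p q : ℕ}
    [Fact p.Prime] [Fact q.Prime] (hpq : p ≠ q) {L A B : Subgroup G} [Group.IsNilpotent L]
    (hA : IsPGroup p A) (hB : IsPGroup q B) (hAL : A ≤ L) (hBL : B ≤ L) :
    A ≤ centralizer (B : Set G) := by
  intro x hx
  refine mem_centralizer_iff.mpr fun y hy => ?_
  obtain ⟨S, hS⟩ := (hA.comap_subtype (K := L)).exists_le_sylow
  obtain ⟨T, hT⟩ := (hB.comap_subtype (K := L)).exists_le_sylow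
  have hST := commute_of_normal_of_disjoint _ _ inferInstance inferInstance
    (IsPGroup.disjoint_of_ne p q hpq _ _ S.isPGroup' T.isPGroup')
    ⟨x, hAL hx⟩ ⟨y, hBL hy⟩ (hS hx) (hT hy)
  exact (congrArg Subtype.val hST).symm

theorem Sylow.pairwise_commute_of_normal {G : Type*} [Group G] {ι : Type*} {p : ι → ℕ}
    (hp : ∀ i, (p i).Prime) (hpinj : Function.Injective p) (P : ∀ i, Sylow (p i) G)
    (hPn : ∀ i, (P i : Subgroup G).Normal) :
    Pairwise fun i j => ∀ x y : G, x ∈ P i → y ∈ P j → Commute x y := by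
  intro i j hij
  have := Fact.mk (hp i)
  have := Fact.mk (hp j)
  exact commute_of_normal_of_disjoint _ _ (hPn i) (hPn j)
    (IsPGroup.disjoint_of_ne _ _ (hpinj.ne hij) _ _ (P i).isPGroup' (P j).isPGroup')

theorem Sylow.isNilpotent_iSup_of_normal {G : Type*} [Group G] [Finite G] {ι : Type*}
    [Finite ι] {p : ι → ℕ} (hp : ∀ i, (p i).Prime) (hpinj : Function.Injective p)
    (P : ∀ i, Sylow (p i) G) (hPn : ∀ i, (P i : Subgroup G).Normal) :
    Group.IsNilpotent ↥(⨆ i, (P i : Subgroup G)) := by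
  have (i : ι) : Group.IsNilpotent (P i : Subgroup G) :=
    have := Fact.mk (hp i)
    (P i).isPGroup'.isNilpotent
  exact isNilpotent_iSup_of_commute (Sylow.pairwise_commute_of_normal hp hpinj P hPn)

theorem Sylow.dvd_card_of_not_normal {G : Type*} [Group G] [Finite G] {r : ℕ} [Fact r.Prime]
    (R : Sylow r G) (hR : ¬ (R : Subgroup G).Normal) : r ∣ Nat.card G := by
  refine dvd_trans ?_ (card_subgroup_dvd_card (R : Subgroup G))
  refine R.isPGroup'.card_eq_or_dvd.resolve_left fun h => hR ?_
  rw [card_eq_one.mp h]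
  infer_instance

theorem Nat.Prime.exists_eq_of_dvd_prod_card {G : Type*} [Group G] [Finite G] {ι : Type*}
    [Fintype ι] {p : ι → ℕ} (hp : ∀ i, (p i).Prime) {H : ι → Subgroup G}
    (hH : ∀ i, IsPGroup (p i) (H i)) {r : ℕ} (hr : r.Prime) (h : r ∣ ∏ i, Nat.card (H i)) :
    ∃ i, r = p i := by
  obtain ⟨i, -, hi⟩ := hr.prime.exists_mem_finset_dvd h
  have := Fact.mk (hp i)
  obtain ⟨k, hk⟩ := IsPGroup.iff_card.mp (hH i)
  rw [hk] at hi
  exact ⟨i, (Nat.prime_dvd_prime_iff_eq hr (hp i)).mp (hr.dvd_of_dvd_pow hi)⟩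

theorem Sylow.exists_eq_of_not_normal {G : Type*} [Group G] [Finite G] {ι κ : Type*}
    [Fintype ι] [Fintype κ] {p : ι → ℕ} {q : κ → ℕ} (hp : ∀ i, (p i).Prime)
    (hq : ∀ j, (q j).Prime) (hpinj : Function.Injective p) (P : ∀ i, Sylow (p i) G)
    (Q : ∀ j, Sylow (q j) G) (hPn : ∀ i, (P i : Subgroup G).Normal)
    (hQcomm : Pairwise fun i j => ∀ x y : G, x ∈ Q i → y ∈ Q j → Commute x y)
    (htop : ((⨆ i, (P i : Subgroup G)) ⊔ ⨆ j, (Q j : Subgroup G)) = ⊤)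
    {r : ℕ} [hr : Fact r.Prime]
    (R : Sylow r G) (hR : ¬ (R : Subgroup G).Normal) : ∃ j, r = q j := by
  have hdvd := (R.dvd_card_of_not_normal hR).trans <|
    (card_dvd_card_mul_card_of_sup_eq_top htop).trans <| mul_dvd_mul
      (card_iSup_dvd_prod_card_of_commute (Sylow.pairwise_commute_of_normal hp hpinj P hPn))
      (card_iSup_dvd_prod_card_of_commute hQcomm)
  rcases hr.out.dvd_mul.mp hdvd with hP | hQ
  · obtain ⟨i, rfl⟩ := hr.out.exists_eq_of_dvd_prod_card hp (fun i => (P i).isPGroup') hP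
    have := Sylow.unique_of_normal (P i) (hPn i)
    exact absurd (Subsingleton.elim (P i) R ▸ hPn i) hR
  · exact hr.out.exists_eq_of_dvd_prod_card hq (fun j => (Q j).isPGroup') hQ

theorem stmt_15 (G : Type*) [Group G] [Finite G]
    (s t : ℕ) (hs : 1 ≤ s)
    (p : Fin s → ℕ) (q : Fin t → ℕ)
    (hp : ∀ i, (p i).Prime) (hq : ∀ j, (q j).Prime)
    (hpinj : Function.Injective p)
    (hpq : ∀ i j, p i ≠ q j)
    (P : ∀ i, Sylow (p i) G) (Q : ∀ j, Sylow (q j) G)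
    (hPn : ∀ i, (P i : Subgroup G).Normal)
    (hQn : ∀ j, ¬ (Q j : Subgroup G).Normal)
    -- the Sylow subgroups P i, Q j generate G
    (htop : ((⨆ i, (P i : Subgroup G)) ⊔ ⨆ j, (Q j : Subgroup G)) = ⊤)
    -- the Q j's pairwise commute, so that K := Q₁ × ⋯ × Q_t is their internal direct product
    (hQcomm : ∀ j j' : Fin t, j ≠ j' → ∀ x y : G, x ∈ Q j → y ∈ Q j' → Commute x y)
    -- P i for i ≠ s-1 is a direct factor: it centralizes P_s ⋊ (Q₁ × ⋯ × Q_t)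
    (hcent : ∀ i : Fin s, i ≠ ⟨s - 1, by omega⟩ → ∀ x y : G, x ∈ P i →
      y ∈ ((P ⟨s - 1, by omega⟩ : Subgroup G) ⊔ ⨆ j, (Q j : Subgroup G)) → Commute x y)
    (E : Subgroup G) (hE : E ≤ (P ⟨s - 1, by omega⟩ : Subgroup G))
    (hEKnil : Group.IsNilpotent ↥(E ⊔ ⨆ j, (Q j : Subgroup G)))
    -- E(Q₁ × ⋯ × Q_t) is maximal in P_s ⋊ (Q₁ × ⋯ × Q_t)
    (hEKmax : IsCoatom ((E ⊔ ⨆ j, (Q j : Subgroup G)).subgroupOf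
      ((P ⟨s - 1, by omega⟩ : Subgroup G) ⊔ ⨆ j, (Q j : Subgroup G)))) :
    ∀ M : Subgroup G, IsCoatom M →
      (∃ (r : ℕ) (_ : Fact r.Prime) (R : Sylow r G), Subgroup.normalizer ((R : Subgroup G) : Set G) ≤ M) →
      Group.IsNilpotent M := by
  rintro M hM ⟨r, hr, R, hRM⟩
  set i₀ : Fin s := ⟨s - 1, by omega⟩
  set K := ⨆ j, (Q j : Subgroup G)
  set N := ⨆ i : {i // i ≠ i₀}, (P i.1 : Subgroup G)
  have hQcomm' : Pairwise fun j j' => ∀ x y : G, x ∈ Q j → y ∈ Q j' → Commute x y :=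
    fun j j' => hQcomm j j'
  have hRn : ¬ (R : Subgroup G).Normal := fun h =>
    hM.1 (top_le_iff.mp (normalizer_eq_top_iff.mpr h ▸ hRM))
  obtain ⟨j, rfl⟩ := Sylow.exists_eq_of_not_normal hp hq hpinj P Q hPn hQcomm' htop R hRn
  obtain ⟨g, rfl⟩ := MulAction.exists_smul_eq G (Q j) R
  have hNH : N ⊔ (P i₀ ⊔ K) = ⊤ := by
    rw [← htop, iSup_split_single _ i₀, iSup_subtype']
    exact (sup_left_comm _ _ _).trans (sup_assoc _ _ _).symm
  have hNcent : N ≤ centralizer (P i₀ ⊔ K : Subgroup G) := iSup_le fun i x hx =>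
    mem_centralizer_iff.mpr fun y hy => (hcent i.1 i.2 x y hx hy).eq.symm
  have : Group.IsNilpotent N :=
    Sylow.isNilpotent_iSup_of_normal (p := fun i : {i // i ≠ i₀} => p i) (fun i => hp i)
      (hpinj.comp Subtype.val_injective) (fun i => P i) (fun i => hPn i)
  have := hEKnil
  have := Fact.mk (hp i₀)
  have : Group.IsNilpotent ↥(N ⊔ (E ⊔ K)) :=
    isNilpotent_sup_of_le_centralizer (hNcent.trans (centralizer_le (sup_le_sup_right hE K)))
  have hD : IsCoatom (N ⊔ (E ⊔ K)) :=
    isCoatom_sup_of_isCoatom_subgroupOf hNH (sup_le_sup_right hE K) hEKmax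
      (ne_top_of_isNilpotent_of_not_normal (Q j) (hQn j))
  have hQK : (Q j : Subgroup G) ≤ K := le_iSup (fun j => (Q j : Subgroup G)) j
  have hDQ : N ⊔ (E ⊔ K) ≤ normalizer (Q j : Set G) := by
    refine sup_le ?_ (sup_le ?_ (iSup_le_normalizer_of_commute hQcomm' j)) <;>
      refine le_trans ?_ (centralizer_le_normalizer _)
    · exact hNcent.trans (centralizer_le (hQK.trans le_sup_right))
    · exact IsPGroup.le_centralizer_of_isNilpotent (hpq i₀ j) ((P i₀).isPGroup'.to_le hE)
        (Q j).isPGroup' le_sup_left (hQK.trans le_sup_right)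
  rw [Sylow.coe_subgroup_smul] at hRM
  exact isNilpotent_of_isCoatom_of_normalizer_conj_le hD hDQ hM g hRM
end

section
/- Let G be a finite solvable group with a normal Sylow p-subgroup P and complement K, and let M be a maximal subgroup of G containing K with P ⊄ M. If P ∩ M is normalized by K and N_P(P ∩ M) > P ∩ M, then P ∩ M is normal in G. -/
open scoped Pointwise

theorem stmt_19 (G : Type*) [Group G] [Finite G] [Group.IsSolvable G] (p : ℕ) [Fact p.Prime]
    (P : Sylow p G) (hPn : (P : Subgroup G).Normal)
    (K : Subgroup G) (hsup : (P : Subgroup G) ⊔ K = ⊤) (hinf : (P : Subgroup G) ⊓ K = ⊥)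
    (M : Subgroup G) (hM : IsCoatom M) (hKM : K ≤ M) (hPM : ¬ (P : Subgroup G) ≤ M)
    (hnormed : ∀ k ∈ K, ∀ x ∈ (P : Subgroup G) ⊓ M, k * x * k⁻¹ ∈ (P : Subgroup G) ⊓ M)
    (hlt : (P : Subgroup G) ⊓ M < (P : Subgroup G) ⊓ Subgroup.normalizer (((P : Subgroup G) ⊓ M : Subgroup G) : Set G)) :
    ((P : Subgroup G) ⊓ M).Normal := by
  set Q : Subgroup G := (P : Subgroup G) ⊓ M with hQ
  -- K normalizes Q
  have hKN : K ≤ Subgroup.normalizer (Q : Set G) := by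
    intro k hk
    rw [Subgroup.mem_normalizer_iff]
    intro x
    constructor
    · intro hx; exact hnormed k hk x hx
    · intro hx
      have := hnormed k⁻¹ (inv_mem hk) _ hx
      simpa [mul_assoc] using this
  set H : Subgroup G := ((P : Subgroup G) ⊓ Subgroup.normalizer (Q : Set G)) ⊔ K with hH
  -- M ≤ H
  have hMH : M ≤ H := by
    intro m hm
    have hmtop : m ∈ (P : Subgroup G) ⊔ K := by rw [hsup]; trivial
    have : (((P : Subgroup G) ⊔ K : Subgroup G) : Set G)
        = ((P : Subgroup G) : Set G) * (K : Set G) := by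
      exact Subgroup.normal_mul (P : Subgroup G) K
    rcases show m ∈ ((P : Subgroup G) : Set G) * (K : Set G) from this ▸ hmtop with
      ⟨x, hx, k, hk, rfl⟩
    have hxM : x ∈ M := by
      have : x = (x * k) * k⁻¹ := by group
      rw [this]; exact mul_mem hm (inv_mem (hKM hk))
    have hxQ : x ∈ Q := ⟨hx, hxM⟩
    have hx' : x ∈ (P : Subgroup G) ⊓ Subgroup.normalizer (Q : Set G) :=
      ⟨hx, Subgroup.le_normalizer hxQ⟩
    exact mul_mem (Subgroup.mem_sup_left hx') (Subgroup.mem_sup_right hk)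
  -- M < H
  have hMltH : M < H := by
    refine lt_of_le_of_ne hMH ?_
    intro hEq
    obtain ⟨y, hyN, hyQ⟩ := SetLike.exists_of_lt hlt
    have hyH : y ∈ H := Subgroup.mem_sup_left hyN
    exact hyQ ⟨hyN.1, by rw [hEq]; exact hyH⟩
  have hHtop : H = ⊤ := hM.2 H hMltH
  have hNtop : Subgroup.normalizer (Q : Set G) = ⊤ := by
    have : H ≤ Subgroup.normalizer (Q : Set G) := sup_le (le_trans inf_le_right le_rfl) hKN
    rw [hHtop] at this
    exact top_le_iff.mp this
  exact Subgroup.normalizer_eq_top_iff.mp hNtop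
end
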